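/- arXiv:2101.04738 — 2 statements merged into one kernel-verified Lean document; each statement's English description precedes it below -/
import Mathlib

section
/- Under Assumption 2 with ρ > 0, for any M ≥ 1 and any x ∈ ℝⁿ with ℓ_min(x) ≤ ε and V_{f,M}(x) ≤ ε, the finite-tail costs satisfy V_{f,M+1}(x) ≤ (1 + c_M) · V_{f,M}(x), where c_M := C ρ^M (1−ρ)/(1−ρ^M). -/
open Finset Filter
open scoped ENNReal

noncomputable section

open scoped Classical

/-- State/input spaces are Euclidean spaces. -/
abbrev Vec (n : ℕ) := EuclideanSpace ℝ (Fin n)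

/-- Open-loop state trajectory: `x(0) = x`, `x(k+1) = f(x(k), u(k))`. -/
def traj {n m : ℕ} (f : Vec n → Vec m → Vec n) (x : Vec n) (u : ℕ → Vec m) : ℕ → Vec n
  | 0 => x
  | k + 1 => f (traj f x u k) (u k)

/-- Closed-loop state trajectory under the feedback `κ` (the map `φ_x(·, x)`). -/
def phiX {n m : ℕ} (f : Vec n → Vec m → Vec n) (κ : Vec n → Vec m) (x : Vec n) : ℕ → Vec n
  | 0 => x
  | k + 1 => f (phiX f κ x k) (κ (phiX f κ x k))

/-- `ℓ_min(x) := inf_{u ∈ U} ℓ(x, u)`. -/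
def lmin {n m : ℕ} (ℓ : Vec n → Vec m → ℝ) (Uset : Set (Vec m)) (x : Vec n) : ℝ :=
  sInf ((fun u => ℓ x u) '' Uset)

/-- Finite-tail cost `V_{f,M}(x)`: sum of the stage cost along the κ-closed loop if the
constraints are satisfied along the tail, and `+∞` otherwise (for `M = 0` it equals `0`). -/
def Vtail {n m : ℕ} (f : Vec n → Vec m → Vec n) (κ : Vec n → Vec m)
    (ℓ : Vec n → Vec m → ℝ) (Z : Set (Vec n × Vec m)) (M : ℕ) (x : Vec n) : ℝ≥0∞ :=
  if ∀ k < M, (phiX f κ x k, κ (phiX f κ x k)) ∈ Z then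
    ENNReal.ofReal (∑ k ∈ Finset.range M, ℓ (phiX f κ x k) (κ (phiX f κ x k)))
  else ⊤

/-- Feasibility of the input sequence `u` over horizon `N` from state `x`. -/
def Feasible {n m : ℕ} (f : Vec n → Vec m → Vec n) (Z : Set (Vec n × Vec m))
    (Uset : Set (Vec m)) (N : ℕ) (x : Vec n) (u : ℕ → Vec m) : Prop :=
  ∀ k < N, u k ∈ Uset ∧ (traj f x u k, u k) ∈ Z

/-- MPC open-loop cost `J_{N,M}` of the input sequence `u` from state `x`. -/
def Jcost {n m : ℕ} (f : Vec n → Vec m → Vec n) (κ : Vec n → Vec m)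
    (ℓ : Vec n → Vec m → ℝ) (Z : Set (Vec n × Vec m)) (N M : ℕ) (x : Vec n)
    (u : ℕ → Vec m) : ℝ≥0∞ :=
  ENNReal.ofReal (∑ k ∈ Finset.range N, ℓ (traj f x u k) (u k)) +
    Vtail f κ ℓ Z M (traj f x u N)

/-- MPC value function `V_{N,M}(x)` (equal to `+∞` if the problem is infeasible). -/
def Vmpc {n m : ℕ} (f : Vec n → Vec m → Vec n) (κ : Vec n → Vec m)
    (ℓ : Vec n → Vec m → ℝ) (Z : Set (Vec n × Vec m)) (Uset : Set (Vec m))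
    (N M : ℕ) (x : Vec n) : ℝ≥0∞ :=
  ⨅ (u : ℕ → Vec m) (_ : Feasible f Z Uset N x u), Jcost f κ ℓ Z N M x u

/-- `u` is a minimizing (optimal) input sequence for `V_{N,M}(x)`. -/
def IsMinimizer {n m : ℕ} (f : Vec n → Vec m → Vec n) (κ : Vec n → Vec m)
    (ℓ : Vec n → Vec m → ℝ) (Z : Set (Vec n × Vec m)) (Uset : Set (Vec m))
    (N M : ℕ) (x : Vec n) (u : ℕ → Vec m) : Prop :=
  Feasible f Z Uset N x u ∧ Vmpc f κ ℓ Z Uset N M x = Jcost f κ ℓ Z N M x u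

/-- Infinite-horizon optimal cost `V_{∞,0}(x)`. -/
def Vinf {n m : ℕ} (f : Vec n → Vec m → Vec n) (ℓ : Vec n → Vec m → ℝ)
    (Z : Set (Vec n × Vec m)) (Uset : Set (Vec m)) (x : Vec n) : ℝ≥0∞ :=
  ⨅ (u : ℕ → Vec m) (_ : ∀ k, u k ∈ Uset ∧ (traj f x u k, u k) ∈ Z),
    ∑' k : ℕ, ENNReal.ofReal (ℓ (traj f x u k) (u k))

/-- Assumption 2 (locally stabilizing controller): exponential decay of the stage
cost along the κ-closed loop and constraint satisfaction, locally (`ℓ_min(x) ≤ ε`). -/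
def Assumption2 {n m : ℕ} (f : Vec n → Vec m → Vec n) (κ : Vec n → Vec m)
    (ℓ : Vec n → Vec m → ℝ) (Z : Set (Vec n × Vec m)) (Uset : Set (Vec m))
    (ρ C ε : ℝ) : Prop :=
  ρ ∈ Set.Ico (0 : ℝ) 1 ∧ 1 ≤ C ∧ 0 < ε ∧
    ∀ x : Vec n, lmin ℓ Uset x ≤ ε → ∀ k : ℕ,
      ℓ (phiX f κ x k) (κ (phiX f κ x k)) ≤ C * ρ ^ k * lmin ℓ Uset x ∧
      (phiX f κ x k, κ (phiX f κ x k)) ∈ Z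

/-- A class-`K∞` function: continuous, strictly increasing and unbounded on `[0,∞)`
with `α(0) = 0`. -/
def IsKInfty (α : ℝ → ℝ) : Prop :=
  ContinuousOn α (Set.Ici 0) ∧ StrictMonoOn α (Set.Ici 0) ∧ α 0 = 0 ∧
    Tendsto α atTop atTop


/-!
Every closed-loop stage cost `ℓ_κ(φ_x(k,x))`, `k < M`, dominates `ℓ_min(φ_x(k,x))` and is at
most `V_{f,M}(x) ≤ ε`, so Assumption 2 may be restarted at `φ_x(k,x)`; this gives
`ρ^k ℓ_κ(φ_x(M,x)) ≤ C ρ^M ℓ_κ(φ_x(k,x))`. Summing over `k < M` and using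
`∑_{k<M} ρ^k = (1 - ρ^M)/(1 - ρ)` bounds the extra stage cost of `V_{f,M+1}(x)` by
`c_M V_{f,M}(x)`.
-/

theorem le_mul_sum_range_of_geometric_decay {L : ℕ → ℝ} {ρ C : ℝ} {M : ℕ}
    (hρ0 : 0 ≤ ρ) (hρ1 : ρ < 1) (hM : M ≠ 0)
    (hdecay : ∀ k < M, L M ≤ C * ρ ^ (M - k) * L k) :
    L M ≤ C * ρ ^ M * (1 - ρ) / (1 - ρ ^ M) * ∑ k ∈ range M, L k := by
  have hρM : 0 < 1 - ρ ^ M := sub_pos.2 (pow_lt_one₀ hρ0 hρ1 hM)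
  have hweighted : ∀ k < M, ρ ^ k * L M ≤ C * ρ ^ M * L k := fun k hk => by
    calc ρ ^ k * L M ≤ ρ ^ k * (C * ρ ^ (M - k) * L k) := by
          gcongr
          exact hdecay k hk
      _ = C * (ρ ^ k * ρ ^ (M - k)) * L k := by ring
      _ = C * ρ ^ M * L k := by rw [← pow_add, Nat.add_sub_cancel' hk.le]
  have hsum : (∑ k ∈ range M, ρ ^ k) * L M ≤ C * ρ ^ M * ∑ k ∈ range M, L k := by
    rw [sum_mul, mul_sum]
    exact sum_le_sum fun k hk => hweighted k (mem_range.1 hk)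
  rw [div_mul_eq_mul_div, le_div_iff₀ hρM, ← geom_sum_mul_neg]
  calc L M * ((∑ k ∈ range M, ρ ^ k) * (1 - ρ))
      = (∑ k ∈ range M, ρ ^ k) * L M * (1 - ρ) := by ring
    _ ≤ C * ρ ^ M * (∑ k ∈ range M, L k) * (1 - ρ) := by gcongr
    _ = _ := by ring

theorem lmin_le_of_mem {n m : ℕ} {ℓ : Vec n → Vec m → ℝ} {Uset : Set (Vec m)}
    (hℓ0 : ∀ x u, 0 ≤ ℓ x u) {x : Vec n} {u : Vec m} (hu : u ∈ Uset) :
    lmin ℓ Uset x ≤ ℓ x u :=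
  csInf_le ⟨0, by rintro _ ⟨v, -, rfl⟩; exact hℓ0 x v⟩ ⟨u, hu, rfl⟩

section ClosedLoop

variable {n m : ℕ} (f : Vec n → Vec m → Vec n) (κ : Vec n → Vec m)
  (ℓ : Vec n → Vec m → ℝ)

def closedLoopCost (x : Vec n) (k : ℕ) : ℝ :=
  ℓ (phiX f κ x k) (κ (phiX f κ x k))

theorem phiX_phiX (x : Vec n) (k : ℕ) :
    ∀ j : ℕ, phiX f κ (phiX f κ x k) j = phiX f κ x (k + j)
  | 0 => rfl
  | j + 1 => congrArg (fun y => f y (κ y)) (phiX_phiX x k j)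

theorem closedLoopCost_phiX (x : Vec n) (k j : ℕ) :
    closedLoopCost f κ ℓ (phiX f κ x k) j = closedLoopCost f κ ℓ x (k + j) := by
  simp only [closedLoopCost, phiX_phiX]

theorem Vtail_eq_ofReal_sum {Z : Set (Vec n × Vec m)} {x : Vec n} {M : ℕ}
    (hZ : ∀ k < M, (phiX f κ x k, κ (phiX f κ x k)) ∈ Z) :
    Vtail f κ ℓ Z M x = ENNReal.ofReal (∑ k ∈ range M, closedLoopCost f κ ℓ x k) :=
  if_pos hZ

variable {f κ ℓ}

theorem Assumption2.closedLoopCost_le {Z : Set (Vec n × Vec m)} {Uset : Set (Vec m)}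
    {ρ C ε : ℝ} (hA2 : Assumption2 f κ ℓ Z Uset ρ C ε) (hℓ0 : ∀ x u, 0 ≤ ℓ x u)
    (hκU : ∀ x, κ x ∈ Uset) {x : Vec n} (hx : lmin ℓ Uset x ≤ ε) (k : ℕ) :
    closedLoopCost f κ ℓ x k ≤ C * ρ ^ k * closedLoopCost f κ ℓ x 0 := by
  obtain ⟨⟨hρ0, -⟩, hC, -, hA⟩ := hA2
  calc closedLoopCost f κ ℓ x k ≤ C * ρ ^ k * lmin ℓ Uset x := (hA x hx k).1
    _ ≤ C * ρ ^ k * closedLoopCost f κ ℓ x 0 :=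
      mul_le_mul_of_nonneg_left (lmin_le_of_mem hℓ0 (hκU x))
        (mul_nonneg (by linarith) (pow_nonneg hρ0 k))

end ClosedLoop

theorem finite_tail_cost_relative_increment_general {n m : ℕ}
    (f : Vec n → Vec m → Vec n) (κ : Vec n → Vec m) (ℓ : Vec n → Vec m → ℝ)
    (Z : Set (Vec n × Vec m)) (Uset : Set (Vec m)) (ρ C ε : ℝ)
    (hℓ0 : ∀ x u, 0 ≤ ℓ x u) (hκU : ∀ x, κ x ∈ Uset)
    (hA2 : Assumption2 f κ ℓ Z Uset ρ C ε) :
    ∀ (M : ℕ), 1 ≤ M → ∀ x : Vec n, lmin ℓ Uset x ≤ ε →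
      Vtail f κ ℓ Z M x ≤ ENNReal.ofReal ε →
      Vtail f κ ℓ Z (M + 1) x ≤
        ENNReal.ofReal (1 + C * ρ ^ M * (1 - ρ) / (1 - ρ ^ M)) * Vtail f κ ℓ Z M x := by
  intro M hM x hx hV
  have ⟨⟨hρ0, hρ1⟩, _, hε, hA⟩ := hA2
  set L := closedLoopCost f κ ℓ x
  have hZ : ∀ k, (phiX f κ x k, κ (phiX f κ x k)) ∈ Z := fun k => (hA x hx k).2
  rw [Vtail_eq_ofReal_sum f κ ℓ fun k _ => hZ k] at hV ⊢
  rw [Vtail_eq_ofReal_sum f κ ℓ fun k _ => hZ k, sum_range_succ]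
  have hS0 : 0 ≤ ∑ k ∈ range M, L k := sum_nonneg fun k _ => hℓ0 _ _
  have hSε : ∑ k ∈ range M, L k ≤ ε := (ENNReal.ofReal_le_ofReal_iff hε.le).1 hV
  have hdecay : ∀ k < M, L M ≤ C * ρ ^ (M - k) * L k := fun k hk => by
    have hLk : L k ≤ ε :=
      (single_le_sum (f := L) (fun j _ => hℓ0 _ _) (mem_range.2 hk)).trans hSε
    have := hA2.closedLoopCost_le hℓ0 hκU ((lmin_le_of_mem hℓ0 (hκU _)).trans hLk) (M - k)
    rwa [closedLoopCost_phiX, closedLoopCost_phiX, Nat.add_sub_cancel' hk.le, add_zero] at this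
  have hLM := le_mul_sum_range_of_geometric_decay hρ0 hρ1 (by omega) hdecay
  rw [← ENNReal.ofReal_mul' hS0]
  exact ENNReal.ofReal_le_ofReal (by linarith)

/-- Proposition 2, eq. (4c): under Assumption 2 with `ρ > 0`, for `M ≥ 1`
and any `x` with `ℓ_min(x) ≤ ε` and `V_{f,M}(x) ≤ ε`,
`V_{f,M+1}(x) ≤ (1 + c_M) V_{f,M}(x)` with `c_M = C ρ^M (1 - ρ)/(1 - ρ^M)`. -/
theorem finite_tail_cost_relative_increment {n m : ℕ}
    (f : Vec n → Vec m → Vec n) (κ : Vec n → Vec m) (ℓ : Vec n → Vec m → ℝ)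
    (Z : Set (Vec n × Vec m)) (Uset : Set (Vec m)) (ρ C ε : ℝ)
    (hf : Continuous fun p : Vec n × Vec m => f p.1 p.2)
    (hℓ : Continuous fun p : Vec n × Vec m => ℓ p.1 p.2) (hℓ0 : ∀ x u, 0 ≤ ℓ x u)
    (hU : IsCompact Uset) (hκ : Continuous κ) (hκU : ∀ x, κ x ∈ Uset)
    (hA2 : Assumption2 f κ ℓ Z Uset ρ C ε) (hρ : 0 < ρ) :
    ∀ (M : ℕ), 1 ≤ M → ∀ x : Vec n, lmin ℓ Uset x ≤ ε →
      Vtail f κ ℓ Z M x ≤ ENNReal.ofReal ε →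
      Vtail f κ ℓ Z (M + 1) x ≤
        ENNReal.ofReal (1 + C * ρ ^ M * (1 - ρ) / (1 - ρ ^ M)) * Vtail f κ ℓ Z M x :=
  finite_tail_cost_relative_increment_general f κ ℓ Z Uset ρ C ε hℓ0 hκU hA2
end
end

section
/- Under Assumption 2, let N ≥ 1, M ≥ 1, let x ∈ ℝⁿ have a minimizing input sequence u*(·) for V_{N,M}(x) with state trajectory x*(·), and suppose ℓ_min(x*(N)) ≤ ε. Then the shifted candidate solution (appending the feedback κ) yields V_{N,M}(f(x, u*(0))) ≤ V_{N,M}(x) − ℓ(x, u*(0)) + V_{f,M+1}(x*(N)) − V_{f,M}(x*(N)). -/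
/-!
The candidate input sequence `u*(1), …, u*(N-1), κ(x*(N))` is feasible from `f(x, u*(0))`:
its trajectory is `x*(1), …, x*(N)`, and Assumption 2 (at time `0`) places `(x*(N), κ(x*(N)))`
in `Z`. Its cost is that of `u*` with the first stage `ℓ(x, u*(0))` dropped and one closed-loop
stage moved from the terminal tail into the horizon, i.e. `J_{N,M} = J_{N-1,M+1}` along the
candidate. Hence `V_{N,M}(f(x,u*(0))) + ℓ(x,u*(0)) ≤ Σ_{k<N} ℓ(x*(k),u*(k)) + V_{f,M+1}(x*(N))`,
and adding `V_{f,M}(x*(N))` to both sides gives the claim without subtracting in `ℝ≥0∞`.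
-/

open Finset Filter
open scoped ENNReal

noncomputable section

open scoped Classical

section CandidateSolution

variable {n m : ℕ} (f : Vec n → Vec m → Vec n) (κ : Vec n → Vec m) (ℓ : Vec n → Vec m → ℝ)
  (Z : Set (Vec n × Vec m)) (Uset : Set (Vec m))

lemma phiX_apply_feedback (x : Vec n) : ∀ k, phiX f κ (f x (κ x)) k = phiX f κ x (k + 1)
  | 0 => rfl
  | k + 1 => congrArg (fun y => f y (κ y)) (phiX_apply_feedback x k)

lemma traj_congr {x : Vec n} {u v : ℕ → Vec m} :
    ∀ {k}, (∀ j < k, u j = v j) → traj f x u k = traj f x v k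
  | 0, _ => rfl
  | k + 1, h => by
    simp only [traj, traj_congr fun j hj => h j (Nat.lt_succ_of_lt hj), h k k.lt_succ_self]

lemma traj_shift (x : Vec n) (u : ℕ → Vec m) :
    ∀ k, traj f (f x (u 0)) (fun k => u (k + 1)) k = traj f x u (k + 1)
  | 0 => rfl
  | k + 1 => congrArg (f · (u (k + 1))) (traj_shift x u k)

variable {f κ Z Uset}

lemma Feasible.shift {N : ℕ} {x : Vec n} {u : ℕ → Vec m} (h : Feasible f Z Uset (N + 1) x u) :
    Feasible f Z Uset N (f x (u 0)) (fun k => u (k + 1)) := fun k hk => by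
  simpa only [traj_shift] using h (k + 1) (Nat.succ_lt_succ hk)

lemma Feasible.congr {N : ℕ} {x : Vec n} {u v : ℕ → Vec m} (h : Feasible f Z Uset N x u)
    (huv : ∀ k < N, u k = v k) : Feasible f Z Uset N x v := fun k hk => by
  rw [← huv k hk, ← traj_congr f fun j hj => huv j (hj.trans hk)]
  exact h k hk

lemma Feasible.succ {N : ℕ} {x : Vec n} {u : ℕ → Vec m} (h : Feasible f Z Uset N x u)
    (hU : u N ∈ Uset) (hZ : (traj f x u N, u N) ∈ Z) : Feasible f Z Uset (N + 1) x u :=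
  fun k hk => (Nat.lt_succ_iff_lt_or_eq.mp hk).elim (h k) fun hkN => hkN ▸ ⟨hU, hZ⟩

variable {ℓ}

lemma Vtail_succ (hℓ0 : ∀ x u, 0 ≤ ℓ x u) (M : ℕ) {y : Vec n} (hy : (y, κ y) ∈ Z) :
    Vtail f κ ℓ Z (M + 1) y =
      ENNReal.ofReal (ℓ y (κ y)) + Vtail f κ ℓ Z M (f y (κ y)) := by
  have hfeas : (∀ k < M + 1, (phiX f κ y k, κ (phiX f κ y k)) ∈ Z) ↔
      ∀ k < M, (phiX f κ (f y (κ y)) k, κ (phiX f κ (f y (κ y)) k)) ∈ Z := by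
    simp only [phiX_apply_feedback]
    refine ⟨fun h k hk => h (k + 1) (Nat.succ_lt_succ hk), fun h k hk => ?_⟩
    rcases k with _ | k
    exacts [hy, h k (Nat.succ_lt_succ_iff.mp hk)]
  unfold Vtail
  by_cases h : ∀ k < M, (phiX f κ (f y (κ y)) k, κ (phiX f κ (f y (κ y)) k)) ∈ Z
  · rw [if_pos (hfeas.mpr h), if_pos h, sum_range_succ', add_comm,
      ENNReal.ofReal_add (hℓ0 _ _) (sum_nonneg fun _ _ => hℓ0 _ _)]
    simp only [phiX_apply_feedback, phiX]
  · rw [if_neg (mt hfeas.mp h), if_neg h, add_top]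

lemma Jcost_succ (hℓ0 : ∀ x u, 0 ≤ ℓ x u) (N M : ℕ) (x : Vec n) (u : ℕ → Vec m) :
    Jcost f κ ℓ Z (N + 1) M x u =
      ENNReal.ofReal (ℓ x (u 0)) + Jcost f κ ℓ Z N M (f x (u 0)) (fun k => u (k + 1)) := by
  simp only [Jcost, traj_shift, ← add_assoc]
  rw [← ENNReal.ofReal_add (hℓ0 _ _) (sum_nonneg fun _ _ => hℓ0 _ _), sum_range_succ',
    add_comm (ℓ x (u 0))]
  rfl

lemma Jcost_congr {N M : ℕ} {x : Vec n} {u v : ℕ → Vec m} (huv : ∀ k < N, u k = v k) :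
    Jcost f κ ℓ Z N M x u = Jcost f κ ℓ Z N M x v := by
  have htraj : ∀ k ≤ N, traj f x u k = traj f x v k := fun k hk =>
    traj_congr f fun j hj => huv j (hj.trans_le hk)
  unfold Jcost
  rw [sum_congr rfl fun k hk => by rw [htraj k (mem_range.mp hk).le, huv k (mem_range.mp hk)],
    htraj N le_rfl]

lemma Jcost_succ_of_feedback (hℓ0 : ∀ x u, 0 ≤ ℓ x u) {N : ℕ} (M : ℕ) {x : Vec n}
    {u : ℕ → Vec m} (hκ : u N = κ (traj f x u N)) (hZ : (traj f x u N, u N) ∈ Z) :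
    Jcost f κ ℓ Z (N + 1) M x u = Jcost f κ ℓ Z N (M + 1) x u := by
  rw [hκ] at hZ
  rw [Jcost, Jcost, Vtail_succ hℓ0 M hZ, sum_range_succ,
    ENNReal.ofReal_add (sum_nonneg fun _ _ => hℓ0 _ _) (hℓ0 _ _), add_assoc, traj, hκ]

lemma Jcost_add_Vtail_comm (N M M' : ℕ) (x : Vec n) (u : ℕ → Vec m) :
    Jcost f κ ℓ Z N M x u + Vtail f κ ℓ Z M' (traj f x u N) =
      Jcost f κ ℓ Z N M' x u + Vtail f κ ℓ Z M (traj f x u N) :=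
  add_right_comm _ _ _

end CandidateSolution

theorem shifted_candidate_decrease_general {n m : ℕ}
    (f : Vec n → Vec m → Vec n) (κ : Vec n → Vec m) (ℓ : Vec n → Vec m → ℝ)
    (Z : Set (Vec n × Vec m)) (Uset : Set (Vec m)) (ρ C ε : ℝ)
    (hℓ0 : ∀ x u, 0 ≤ ℓ x u)
    (hκU : ∀ x, κ x ∈ Uset)
    (hA2 : Assumption2 f κ ℓ Z Uset ρ C ε)
    (N M : ℕ) (hN : 1 ≤ N) (x : Vec n)
    (u : ℕ → Vec m) (hu : IsMinimizer f κ ℓ Z Uset N M x u)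
    (hterm : lmin ℓ Uset (traj f x u N) ≤ ε) :
    Vmpc f κ ℓ Z Uset N M (f x (u 0)) + ENNReal.ofReal (ℓ x (u 0)) +
        Vtail f κ ℓ Z M (traj f x u N) ≤
      Vmpc f κ ℓ Z Uset N M x + Vtail f κ ℓ Z (M + 1) (traj f x u N) := by
  obtain ⟨hfeas, hval⟩ := hu
  obtain ⟨N, rfl⟩ := Nat.exists_eq_add_of_le' hN
  set xN := traj f x u (N + 1)
  obtain ⟨-, -, -, hstab⟩ := hA2
  have hZ : (xN, κ xN) ∈ Z := (hstab xN hterm 0).2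
  set v := Function.update (fun k => u (k + 1)) N (κ xN)
  have hv : ∀ k < N, u (k + 1) = v k := fun k hk => by simp [v, hk.ne]
  have hvN : traj f (f x (u 0)) v N = xN := by rw [← traj_congr f hv, traj_shift]
  have hvfeas : Feasible f Z Uset (N + 1) (f x (u 0)) v :=
    (hfeas.shift.congr hv).succ (by simpa [v] using hκU xN) (by simpa [v, hvN] using hZ)
  calc Vmpc f κ ℓ Z Uset (N + 1) M (f x (u 0)) + ENNReal.ofReal (ℓ x (u 0)) + Vtail f κ ℓ Z M xN
      ≤ Jcost f κ ℓ Z (N + 1) M (f x (u 0)) v + ENNReal.ofReal (ℓ x (u 0)) +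
          Vtail f κ ℓ Z M xN := by gcongr; exact iInf₂_le v hvfeas
    _ = Jcost f κ ℓ Z (N + 1) (M + 1) x u + Vtail f κ ℓ Z M xN := by
      rw [Jcost_succ_of_feedback hℓ0 M (by simp [v, hvN]) (by simpa [v, hvN] using hZ),
        ← Jcost_congr hv, Jcost_succ hℓ0, add_comm (Jcost _ _ _ _ _ _ _ _)]
    _ = Vmpc f κ ℓ Z Uset (N + 1) M x + Vtail f κ ℓ Z (M + 1) xN := by
      rw [Jcost_add_Vtail_comm, hval]

/-- candidate-solution decrease: under Assumption 2, if `u*` is a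
minimizing sequence for `V_{N,M}(x)` with trajectory `x*` and `ℓ_min(x*(N)) ≤ ε`, then
shifting and appending the feedback `κ` yields
`V_{N,M}(f(x,u*(0))) ≤ V_{N,M}(x) - ℓ(x,u*(0)) + V_{f,M+1}(x*(N)) - V_{f,M}(x*(N))`
(stated additively, all involved terms being finite). -/
theorem shifted_candidate_decrease {n m : ℕ}
    (f : Vec n → Vec m → Vec n) (κ : Vec n → Vec m) (ℓ : Vec n → Vec m → ℝ)
    (Z : Set (Vec n × Vec m)) (Uset : Set (Vec m)) (ρ C ε : ℝ)
    (hf : Continuous fun p : Vec n × Vec m => f p.1 p.2)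
    (hℓ : Continuous fun p : Vec n × Vec m => ℓ p.1 p.2) (hℓ0 : ∀ x u, 0 ≤ ℓ x u)
    (hU : IsCompact Uset) (hκ : Continuous κ) (hκU : ∀ x, κ x ∈ Uset)
    (hA2 : Assumption2 f κ ℓ Z Uset ρ C ε)
    (N M : ℕ) (hN : 1 ≤ N) (hM : 1 ≤ M) (x : Vec n)
    (u : ℕ → Vec m) (hu : IsMinimizer f κ ℓ Z Uset N M x u)
    (hterm : lmin ℓ Uset (traj f x u N) ≤ ε) :
    Vmpc f κ ℓ Z Uset N M (f x (u 0)) + ENNReal.ofReal (ℓ x (u 0)) +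
        Vtail f κ ℓ Z M (traj f x u N) ≤
      Vmpc f κ ℓ Z Uset N M x + Vtail f κ ℓ Z (M + 1) (traj f x u N) :=
  shifted_candidate_decrease_general f κ ℓ Z Uset ρ C ε hℓ0 hκU hA2 N M hN x u hu hterm
end
end
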